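/- arXiv:1307.7486 — 2 statements merged into one kernel-verified Lean document; each statement's English description precedes it below -/
import Mathlib

section
/- Let G be a finite simple connected graph of order n ≥ 2 whose vertex set is partitioned into p independent sets of cardinalities n_1, n_2, ..., n_p, and suppose δ(G) ≥ n_i for some i. Then χ_d^t(G) ≤ n − n' + 1, where n' = max{n_i : δ(G) ≥ n_i} and δ(G) denotes the minimum degree of G. -/
/-!
Color a largest independent class `S = P i` with `|S| ≤ δ(G)` by a single color and give every
other vertex a color of its own, using `n - |S| + 1` colors. A vertex with a neighbor `u ∉ S`
dominates the singleton class `{u}`. Otherwise its neighborhood lies in `S`, and since it has at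
least `δ(G) ≥ |S|` neighbors, it equals `S`, so the vertex dominates the class `S`, which is
nonempty because a connected graph on at least two vertices has no isolated vertex.
-/

open SimpleGraph

/-- `f` is a total dominator coloring of `G`: a proper coloring (with colors in `Fin n`)
such that every vertex is adjacent to every vertex of some nonempty color class. -/
def IsTDColoring {V : Type*} (G : SimpleGraph V) {n : ℕ} (f : V → Fin n) : Prop :=
  (∀ u v : V, G.Adj u v → f u ≠ f v) ∧
  ∀ v : V, ∃ i : Fin n, (∃ u, f u = i) ∧ ∀ u : V, f u = i → G.Adj v u

/-- The total dominator chromatic number `χ_d^t(G)`: the minimum number of color classes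
in a total dominator coloring of `G`. -/
noncomputable def tdChromNum {V : Type*} (G : SimpleGraph V) : ℕ :=
  sInf {n : ℕ | ∃ f : V → Fin n, IsTDColoring G f}

/-- `f` is a dominator coloring of `G`: a proper coloring such that every vertex dominates
some nonempty color class (the class is contained in its closed neighborhood). -/
def IsDColoring {V : Type*} (G : SimpleGraph V) {n : ℕ} (f : V → Fin n) : Prop :=
  (∀ u v : V, G.Adj u v → f u ≠ f v) ∧
  ∀ v : V, ∃ i : Fin n, (∃ u, f u = i) ∧ ∀ u : V, f u = i → u = v ∨ G.Adj v u

/-- The dominator chromatic number `χ_d(G)`. -/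
noncomputable def dChromNum {V : Type*} (G : SimpleGraph V) : ℕ :=
  sInf {n : ℕ | ∃ f : V → Fin n, IsDColoring G f}

/-- The total domination number `γ_t(G)`: the minimum size of a set `S` such that every
vertex of `G` has a neighbor in `S`. -/
noncomputable def totalDomNum {V : Type*} (G : SimpleGraph V) : ℕ :=
  sInf {n : ℕ | ∃ S : Finset V, S.card = n ∧ ∀ v : V, ∃ u ∈ S, G.Adj v u}

section

variable {V : Type*} {G : SimpleGraph V}

theorem tdChromNum_le_card {α : Type*} [Fintype α] (f : V → α)
    (hproper : ∀ u v, G.Adj u v → f u ≠ f v)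
    (hdom : ∀ v, ∃ a, (∃ u, f u = a) ∧ ∀ u, f u = a → G.Adj v u) :
    tdChromNum G ≤ Fintype.card α := by
  let e := Fintype.equivFin α
  refine Nat.sInf_le ⟨e ∘ f, fun u v huv h => hproper u v huv (e.injective h), fun v => ?_⟩
  obtain ⟨a, ⟨u, hu⟩, hadj⟩ := hdom v
  exact ⟨e a, ⟨u, by simp [hu]⟩, fun w hw => hadj w (e.injective hw)⟩

def collapseColoring [DecidableEq V] (S : Finset V) (v : V) : Option {v // v ∉ S} :=
  if h : v ∈ S then none else some ⟨v, h⟩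

theorem collapseColoring_eq_none_iff [DecidableEq V] {S : Finset V} {v : V} :
    collapseColoring S v = none ↔ v ∈ S := by
  unfold collapseColoring
  split_ifs with h <;> simp [h]

theorem collapseColoring_eq_some_iff [DecidableEq V] {S : Finset V} {v : V} {u : {v // v ∉ S}} :
    collapseColoring S v = some u ↔ v = u := by
  unfold collapseColoring
  split_ifs with h
  · exact iff_of_false (by simp) fun hv => u.2 (hv ▸ h)
  · simp [Subtype.ext_iff]

theorem collapseColoring_proper [DecidableEq V] {S : Finset V}
    (hS : ∀ u ∈ S, ∀ v ∈ S, ¬ G.Adj u v) (u v : V) (huv : G.Adj u v) :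
    collapseColoring S u ≠ collapseColoring S v := by
  intro h
  cases hu : collapseColoring S u with
  | none =>
    rw [hu, eq_comm, collapseColoring_eq_none_iff] at h
    exact hS u (collapseColoring_eq_none_iff.mp hu) v h huv
  | some w =>
    rw [hu, eq_comm, collapseColoring_eq_some_iff] at h
    rw [collapseColoring_eq_some_iff, ← h] at hu
    exact G.loopless.irrefl u (hu ▸ huv)

theorem collapseColoring_dominating [Fintype V] [DecidableEq V] [DecidableRel G.Adj]
    {S : Finset V} (hS : S.card ≤ G.minDegree) (hG : ∀ v, ∃ u, G.Adj v u) (v : V) :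
    ∃ a, (∃ u, collapseColoring S u = a) ∧ ∀ u, collapseColoring S u = a → G.Adj v u := by
  by_cases hout : ∃ u, G.Adj v u ∧ u ∉ S
  · obtain ⟨u, hvu, huS⟩ := hout
    refine ⟨some ⟨u, huS⟩, ⟨u, collapseColoring_eq_some_iff.mpr rfl⟩, fun w hw => ?_⟩
    rwa [collapseColoring_eq_some_iff.mp hw]
  · push Not at hout
    have hN : G.neighborFinset v = S := by
      refine Finset.eq_of_subset_of_card_le
        (fun u hu => hout u ((mem_neighborFinset G v u).mp hu)) ?_
      exact (card_neighborFinset_eq_degree G v).symm ▸ hS.trans (G.minDegree_le_degree v)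
    obtain ⟨w, hvw⟩ := hG v
    refine ⟨none, ⟨w, collapseColoring_eq_none_iff.mpr (hout w hvw)⟩, fun u hu => ?_⟩
    rwa [collapseColoring_eq_none_iff, ← hN, mem_neighborFinset] at hu

theorem tdChromNum_le_of_independent [Fintype V] [DecidableRel G.Adj] {S : Finset V}
    (hindep : ∀ u ∈ S, ∀ v ∈ S, ¬ G.Adj u v) (hS : S.card ≤ G.minDegree)
    (hG : ∀ v, ∃ u, G.Adj v u) :
    tdChromNum G ≤ Fintype.card V - S.card + 1 := by
  classical
  have hcard : Fintype.card (Option {v // v ∉ S}) = Fintype.card V - S.card + 1 := by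
    rw [Fintype.card_option, Fintype.card_subtype_compl, Fintype.card_coe]
  exact hcard ▸ tdChromNum_le_card _ (collapseColoring_proper hindep)
    (collapseColoring_dominating hS hG)

end

theorem stmt8_general {V : Type*} [Fintype V] (G : SimpleGraph V) [DecidableRel G.Adj]
    (hconn : G.Connected) (hn : 2 ≤ Fintype.card V)
    (p : ℕ) (P : Fin p → Finset V)
    (hindep : ∀ i : Fin p, ∀ u ∈ P i, ∀ v ∈ P i, ¬ G.Adj u v)
    (hδ : ∃ i : Fin p, (P i).card ≤ G.minDegree) :
    tdChromNum G ≤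
      Fintype.card V - sSup {m : ℕ | ∃ i : Fin p, m = (P i).card ∧ m ≤ G.minDegree} + 1 := by
  have : Nontrivial V := Fintype.one_lt_card_iff_nontrivial.mp hn
  obtain ⟨i, hi, hle⟩ : sSup {m : ℕ | ∃ i : Fin p, m = (P i).card ∧ m ≤ G.minDegree} ∈
      {m : ℕ | ∃ i : Fin p, m = (P i).card ∧ m ≤ G.minDegree} := by
    obtain ⟨i, hi⟩ := hδ
    exact Nat.sSup_mem ⟨_, i, rfl, hi⟩ ⟨G.minDegree, fun m ⟨_, _, hm⟩ => hm⟩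
  rw [hi]
  exact tdChromNum_le_of_independent (hindep i) (hi ▸ hle)
    hconn.preconnected.exists_adj_of_nontrivial

/-- Let `G` be a connected graph of order `n ≥ 2` whose vertex set is partitioned into `p`
independent sets `P 0, …, P (p-1)`. If `δ(G) ≥ |P i|` for some `i`, then
`χ_d^t(G) ≤ n − n' + 1` where `n' = max{|P i| : δ(G) ≥ |P i|}`. -/
theorem stmt8 {V : Type*} [Fintype V] (G : SimpleGraph V) [DecidableRel G.Adj]
    (hconn : G.Connected) (hn : 2 ≤ Fintype.card V)
    (p : ℕ) (P : Fin p → Finset V)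
    (hdisj : ∀ i j : Fin p, i ≠ j → Disjoint (P i) (P j))
    (hcover : ∀ v : V, ∃ i : Fin p, v ∈ P i)
    (hindep : ∀ i : Fin p, ∀ u ∈ P i, ∀ v ∈ P i, ¬ G.Adj u v)
    (hδ : ∃ i : Fin p, (P i).card ≤ G.minDegree) :
    tdChromNum G ≤
      Fintype.card V - sSup {m : ℕ | ∃ i : Fin p, m = (P i).card ∧ m ≤ G.minDegree} + 1 :=
  stmt8_general G hconn hn p P hindep hδ
end

section
/- Let T be a tree of order n ≥ 3 in which every vertex is a leaf or a support vertex, and let s be the number of support vertices of T. Then χ_d^t(T) = s + 1. -/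
open SimpleGraph

/-!
Every support vertex `v` is the unique neighbour of one of its leaves `u`, and `u` must be
adjacent to a whole color class; hence `{v}` is a color class. So the `s` support vertices
occupy `s` singleton classes and any leaf needs one more color. Conversely, giving each
support vertex its own color and all leaves one common color works: two leaves are never
adjacent (the tree is connected with at least three vertices), a vertex with a support neighbour `w`
dominates the class `{w}`, and a vertex without one is the centre of a star, which dominates
the class of all leaves.
-/

open Finset

namespace SimpleGraph

variable {V : Type*} {G : SimpleGraph V}

lemma Reachable.mem_of_forall_adj_mem {s : Set V} (hs : ∀ x ∈ s, ∀ y, G.Adj x y → y ∈ s)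
    {u w : V} (huw : G.Reachable u w) (hu : u ∈ s) : w ∈ s := by
  obtain ⟨p⟩ := huw
  induction p with
  | nil => exact hu
  | cons h _ ih => exact ih (hs _ hu _ h)

lemma Connected.eq_or_adj_of_forall_adj_adj_eq (hG : G.Connected) {v : V}
    (h : ∀ w, G.Adj v w → ∀ x, G.Adj w x → x = v) (x : V) : x = v ∨ G.Adj v x := by
  refine (hG v x).mem_of_forall_adj_mem (s := {x | x = v ∨ G.Adj v x}) ?_ (Or.inl rfl)
  rintro y (rfl | hy) z hz
  · exact Or.inr hz
  · exact Or.inl (h y hy z hz)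

section Degree

variable [Fintype V] [DecidableRel G.Adj]

variable (G) in
def IsSupportVertex (v : V) : Prop :=
  1 < G.degree v ∧ ∃ u, G.Adj v u ∧ G.degree u = 1

lemma eq_of_degree_eq_one_of_adj {u a b : V} (hu : G.degree u = 1) (ha : G.Adj u a)
    (hb : G.Adj u b) : a = b :=
  (degree_eq_one_iff_existsUnique_adj.mp hu).unique ha hb

lemma Connected.not_adj_of_degree_eq_one (hG : G.Connected) (hcard : 3 ≤ Fintype.card V)
    {u w : V} (hu : G.degree u = 1) (hw : G.degree w = 1) : ¬G.Adj u w := by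
  classical
  intro huw
  have hstar := hG.eq_or_adj_of_forall_adj_adj_eq (v := u) fun y hy x hx =>
    eq_of_degree_eq_one_of_adj hw (eq_of_degree_eq_one_of_adj hu hy huw ▸ hx) huw.symm
  have hsub : (univ : Finset V) ⊆ {u, w} := fun x _ => by
    rcases hstar x with rfl | hx
    · exact mem_insert_self _ _
    · simp [eq_of_degree_eq_one_of_adj hu hx huw]
  have := (card_le_card hsub).trans card_le_two
  rw [card_univ] at this
  omega

end Degree

end SimpleGraph

section Coloring

variable {V : Type*} [DecidableEq V]

noncomputable def singletonColoring (S : Finset V) (v : V) : Fin (S.card + 1) :=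
  if h : v ∈ S then (S.equivFin ⟨v, h⟩).succ else 0

lemma singletonColoring_eq_zero_iff {S : Finset V} {x : V} :
    singletonColoring S x = 0 ↔ x ∉ S := by
  unfold singletonColoring
  split_ifs with hx
  · simp [hx, Fin.succ_ne_zero]
  · simp [hx]

lemma singletonColoring_eq_iff {S : Finset V} {w : V} (hw : w ∈ S) {x : V} :
    singletonColoring S x = singletonColoring S w ↔ x = w := by
  refine ⟨fun h => ?_, fun h => h ▸ rfl⟩
  have hx : x ∈ S := by
    by_contra hx
    exact singletonColoring_eq_zero_iff.mp (h ▸ singletonColoring_eq_zero_iff.mpr hx) hw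
  simp only [singletonColoring, dif_pos hx, dif_pos hw] at h
  exact congrArg Subtype.val (S.equivFin.injective (Fin.succ_injective _ h))

lemma isTDColoring_singletonColoring {G : SimpleGraph V} (S : Finset V)
    (hS : ∀ u w, G.Adj u w → u ∈ S ∨ w ∈ S)
    (hdom : ∀ v, (∃ w ∈ S, G.Adj v w) ∨ ((∃ u, u ∉ S) ∧ ∀ u ∉ S, G.Adj v u)) :
    IsTDColoring G (singletonColoring S) := by
  refine ⟨fun u w huw h => ?_, fun v => ?_⟩
  · rcases hS u w huw with hu | hw
    · exact huw.ne ((singletonColoring_eq_iff hu).mp h.symm).symm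
    · exact huw.ne ((singletonColoring_eq_iff hw).mp h)
  · rcases hdom v with ⟨w, hw, hvw⟩ | ⟨⟨u, hu⟩, hrest⟩
    · exact ⟨_, ⟨w, rfl⟩, fun x hx => (singletonColoring_eq_iff hw).mp hx ▸ hvw⟩
    · exact ⟨0, ⟨u, singletonColoring_eq_zero_iff.mpr hu⟩,
        fun x hx => hrest x (singletonColoring_eq_zero_iff.mp hx)⟩

end Coloring

section TotalDominatorColoring

variable {V : Type*} {G : SimpleGraph V}

lemma tdChromNum_eq_of_isTDColoring {n : ℕ} {f : V → Fin n} (hf : IsTDColoring G f)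
    (hmin : ∀ m (g : V → Fin m), IsTDColoring G g → n ≤ m) : tdChromNum G = n :=
  le_antisymm (Nat.sInf_le ⟨f, hf⟩) (le_csInf ⟨n, f, hf⟩ fun m ⟨g, hg⟩ => hmin m g hg)

variable [Fintype V] [DecidableRel G.Adj] {n : ℕ} {f : V → Fin n}

lemma IsTDColoring.eq_of_adj_of_degree_eq_one (hf : IsTDColoring G f) {u v : V}
    (hu : G.degree u = 1) (huv : G.Adj u v) {x : V} (hx : f x = f v) : x = v := by
  obtain ⟨i, ⟨y, hy⟩, hdom⟩ := hf.2 u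
  have hclass : ∀ z, f z = i → z = v := fun z hz =>
    eq_of_degree_eq_one_of_adj hu (hdom z hz) huv
  exact hclass x (hx.trans (hclass y hy ▸ hy))

lemma IsTDColoring.card_add_one_le (hf : IsTDColoring G f) (S : Finset V)
    (hS : ∀ v ∈ S, ∃ u, G.Adj v u ∧ G.degree u = 1) {x₀ : V} (hx₀ : x₀ ∉ S) :
    S.card + 1 ≤ n := by
  classical
  have hsingleton : ∀ v ∈ S, ∀ x, f x = f v → x = v := fun v hv x hx => by
    obtain ⟨u, hvu, hu⟩ := hS v hv
    exact hf.eq_of_adj_of_degree_eq_one hu hvu.symm hx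
  have hinj : Set.InjOn f S := fun x _ y hy hxy => hsingleton y hy x hxy
  have hx₀ : f x₀ ∉ S.image f := by
    simp only [mem_image, not_exists, not_and]
    exact fun w hw hfw => hx₀ (hsingleton w hw x₀ hfw.symm ▸ hw)
  calc S.card + 1 = (insert (f x₀) (S.image f)).card := by
        rw [card_insert_of_notMem hx₀, card_image_of_injOn hinj]
    _ ≤ n := (card_le_univ _).trans (Fintype.card_fin n).le

end TotalDominatorColoring

namespace SimpleGraph

variable {V : Type*} [Fintype V] {G : SimpleGraph V} [DecidableRel G.Adj]
  (hG : G.Connected) (hcard : 3 ≤ Fintype.card V)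
  (hall : ∀ v, G.degree v = 1 ∨ G.IsSupportVertex v)
include hG hcard hall

lemma isSupportVertex_of_adj_of_degree_eq_one {v u : V} (hvu : G.Adj v u)
    (hu : G.degree u = 1) : G.IsSupportVertex v :=
  (hall v).resolve_left fun hv => hG.not_adj_of_degree_eq_one hcard hv hu hvu

lemma isSupportVertex_or_of_adj {u w : V} (huw : G.Adj u w) :
    G.IsSupportVertex u ∨ G.IsSupportVertex w :=
  (hall u).symm.imp_right fun hu =>
    isSupportVertex_of_adj_of_degree_eq_one hG hcard hall huw.symm hu

lemma exists_adj_isSupportVertex_or_forall_adj (v : V) :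
    (∃ w, G.IsSupportVertex w ∧ G.Adj v w) ∨
      ((∃ u, ¬G.IsSupportVertex u) ∧ ∀ u, ¬G.IsSupportVertex u → G.Adj v u) := by
  by_cases hnb : ∃ w, G.IsSupportVertex w ∧ G.Adj v w
  · exact Or.inl hnb
  simp only [not_exists, not_and] at hnb
  have hv : G.IsSupportVertex v := by
    refine (hall v).resolve_left fun hv => ?_
    obtain ⟨w, hvw, -⟩ := degree_eq_one_iff_existsUnique_adj.mp hv
    exact hnb w (isSupportVertex_of_adj_of_degree_eq_one hG hcard hall hvw.symm hv) hvw
  have hstar := hG.eq_or_adj_of_forall_adj_adj_eq (v := v) fun w hvw x hwx =>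
    have hw : G.degree w = 1 := (hall w).resolve_right fun hw => hnb w hw hvw
    eq_of_degree_eq_one_of_adj hw hwx hvw.symm
  obtain ⟨u, -, hu⟩ := hv.2
  exact Or.inr ⟨⟨u, fun hs => hs.1.ne' hu⟩,
    fun x hx => (hstar x).resolve_left fun hxv => hx (hxv ▸ hv)⟩

end SimpleGraph

/-- If `T` is a tree of order `n ≥ 3` in which every vertex is a leaf or a support vertex,
then `χ_d^t(T) = s + 1` where `s` is the number of support vertices. -/
theorem stmt17 {V : Type*} [Fintype V] (T : SimpleGraph V) [DecidableRel T.Adj]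
    (htree : T.IsTree) (hn : 3 ≤ Fintype.card V)
    (hall : ∀ v : V, T.degree v = 1 ∨
      (1 < T.degree v ∧ ∃ u : V, T.Adj v u ∧ T.degree u = 1)) :
    tdChromNum T =
      {v : V | 1 < T.degree v ∧ ∃ u : V, T.Adj v u ∧ T.degree u = 1}.ncard + 1 := by
  classical
  have hT := htree.connected
  set S := univ.filter T.IsSupportVertex
  have hS : {v : V | 1 < T.degree v ∧ ∃ u : V, T.Adj v u ∧ T.degree u = 1} = ↑S := by
    ext; simp [S, IsSupportVertex]
  obtain ⟨x₀, hx₀⟩ : ∃ x₀, ¬T.IsSupportVertex x₀ := by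
    have : Nonempty V := Fintype.card_pos_iff.mp (by omega)
    rcases hall (Classical.arbitrary V) with hv | ⟨-, u, -, hu⟩
    · exact ⟨_, fun hs => hs.1.ne' hv⟩
    · exact ⟨u, fun hs => hs.1.ne' hu⟩
  rw [hS, Set.ncard_coe_finset]
  refine tdChromNum_eq_of_isTDColoring (isTDColoring_singletonColoring S ?_ ?_)
    fun m g hg => hg.card_add_one_le S ?_ (x₀ := x₀) (by simpa [S] using hx₀)
  · simpa [S] using fun u w => isSupportVertex_or_of_adj hT hn hall
  · simpa [S] using exists_adj_isSupportVertex_or_forall_adj hT hn hall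
  · simpa [S] using fun v hv => hv.2
end
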